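/- arXiv:1903.10040 — 2 statements merged into one kernel-verified Lean document; each statement's English description precedes it below -/
import Mathlib

section
/- Let p̂ ∈ Δ_k, r ≥ 0, v ∈ ℝ^k, and c ∈ ℝ. If there exists z ∈ ℝ^k such that v_i − z_i ± r z_j + ⟨z, p̂⟩ ≤ c for all i, j ∈ {1,...,k} and both choices of sign, then for every μ ∈ Δ_k with ‖μ − p̂‖₁ ≤ r one has ⟨μ, v⟩ ≤ c. -/
open Finset

/-- existence of a multiplier z satisfying the sign-indexed family of
inequalities implies ⟨μ, v⟩ ≤ c for every μ in the ℓ¹-ambiguity set around p̂. -/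
theorem multiplier_implies_ambiguity_bound (k : ℕ) (hk : 0 < k)
    (phat : Fin k → ℝ) (hphat : (∀ i, 0 ≤ phat i) ∧ ∑ i, phat i = 1)
    (r : ℝ) (hr : 0 ≤ r) (v : Fin k → ℝ) (c : ℝ)
    (hz : ∃ z : Fin k → ℝ, ∀ (i j : Fin k) (s : ℝ), (s = 1 ∨ s = -1) →
        v i - z i + s * (r * z j) + ∑ l, z l * phat l ≤ c) :
    ∀ μ : Fin k → ℝ, (∀ i, 0 ≤ μ i) → (∑ i, μ i = 1) →
      (∑ i, |μ i - phat i|) ≤ r → ∑ i, μ i * v i ≤ c := by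
  obtain ⟨z, hz⟩ := hz
  intro μ hμ0 hμ1 hμr
  obtain ⟨j, -, hj⟩ := Finset.exists_max_image Finset.univ (fun l => |z l|)
    ⟨⟨0, hk⟩, Finset.mem_univ _⟩
  set s : ℝ := if 0 ≤ z j then 1 else -1 with hs
  have hs' : s = 1 ∨ s = -1 := by by_cases h : 0 ≤ z j <;> simp [hs, h]
  have hsz : s * z j = |z j| := by
    by_cases h : 0 ≤ z j
    · simp [hs, h, abs_of_nonneg h]
    · simp [hs, h, abs_of_neg (lt_of_not_ge h)]
  have h1 : ∑ i, μ i * v i ≤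
      ∑ i, μ i * (c + z i - s * (r * z j) - ∑ l, z l * phat l) := by
    refine Finset.sum_le_sum fun i _ => mul_le_mul_of_nonneg_left ?_ (hμ0 i)
    linarith [hz i j s hs']
  have h2 : ∑ i, μ i * (c + z i - s * (r * z j) - ∑ l, z l * phat l)
      = c + (∑ i, (μ i - phat i) * z i) - s * (r * z j) := by
    have e1 : ∑ i, μ i * (c + z i - s * (r * z j) - ∑ l, z l * phat l)
        = (∑ i, μ i) * (c - s * (r * z j) - ∑ l, z l * phat l) + ∑ i, μ i * z i := by
      rw [Finset.sum_mul, ← Finset.sum_add_distrib]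
      exact Finset.sum_congr rfl fun i _ => by ring
    rw [e1, hμ1]
    have e2 : ∑ i, (μ i - phat i) * z i = ∑ i, μ i * z i - ∑ l, z l * phat l := by
      simp only [sub_mul, Finset.sum_sub_distrib]
      congr 1
      exact Finset.sum_congr rfl fun i _ => by ring
    rw [e2]; ring
  have h3 : ∑ i, (μ i - phat i) * z i ≤ r * |z j| := by
    calc ∑ i, (μ i - phat i) * z i ≤ ∑ i, |(μ i - phat i) * z i| :=
          Finset.sum_le_sum fun i _ => le_abs_self _
      _ = ∑ i, |μ i - phat i| * |z i| := by simp [abs_mul]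
      _ ≤ ∑ i, |μ i - phat i| * |z j| :=
          Finset.sum_le_sum fun i _ =>
            mul_le_mul_of_nonneg_left (hj i (Finset.mem_univ i)) (abs_nonneg _)
      _ = (∑ i, |μ i - phat i|) * |z j| := (Finset.sum_mul _ _ _).symm
      _ ≤ r * |z j| := mul_le_mul_of_nonneg_right hμr (abs_nonneg _)
  have h4 : s * (r * z j) = r * |z j| := by rw [← hsz]; ring
  linarith
end

section
/- Let A_1,...,A_k be n×n real matrices and p ∈ Δ_k. If there exists a symmetric positive definite matrix P such that Σ_{i=1}^k p_i Aᵢᵀ P Aᵢ − P is negative definite, then for every x₀ ∈ ℝⁿ, the sequence of expected second moments M_t := E[x_t x_tᵀ] of the system x_{t+1} = A(w_t) x_t with i.i.d. w_t ~ p and x_0 = x₀ converges to 0; equivalently, M_{t+1} = Σ_i p_i A_i M_t A_iᵀ with M_0 = x₀x₀ᵀ satisfies M_t → 0. -/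
/-!
`V(M) = tr(P M)` is a Lyapunov function for the moment recursion. Writing
`S = ∑ pᵢ Aᵢᵀ P Aᵢ`, cyclicity of the trace gives `tr(P M_{t+1}) = tr(S M_t)`.
Since `P - S ≻ 0`, a compactness argument on the unit sphere yields `S ≼ ρ P` for some
`ρ < 1`, and as every `M_t` is positive semidefinite, `tr(P M_t) ≤ ρ^t tr(P M_0) → 0`.
Finally `P ≽ c I` with `c > 0` forces `tr M_t → 0`, and the entries of a positive
semidefinite matrix are bounded by its trace.
-/

open Finset Matrix Filter Topology

namespace Matrix

variable {n : Type*} [Fintype n]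

theorem smul_dotProduct_mulVec_smul {R : Type*} [CommSemiring R] (B : Matrix n n R) (t : R)
    (x : n → R) : (t • x) ⬝ᵥ B *ᵥ (t • x) = t ^ 2 * (x ⬝ᵥ B *ᵥ x) := by
  rw [mulVec_smul, smul_dotProduct, dotProduct_smul, smul_eq_mul, smul_eq_mul]
  ring

/-- `xᵀPx / xᵀQx` is invariant under scaling `x`, so its bound on the unit sphere bounds it
everywhere. -/
theorem PosDef.exists_pos_smul_sub_posSemidef {Q P : Matrix n n ℝ} (hQ : Q.PosDef)
    (hP : P.IsHermitian) : ∃ C : ℝ, 0 < C ∧ (C • Q - P).PosSemidef := by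
  set ratio : (n → ℝ) → ℝ := fun x => (x ⬝ᵥ P *ᵥ x) / (x ⬝ᵥ Q *ᵥ x)
  have hQpos : ∀ x ≠ 0, 0 < x ⬝ᵥ Q *ᵥ x := fun x hx => by
    simpa using hQ.dotProduct_mulVec_pos hx
  have hcont : ContinuousOn ratio (Metric.sphere 0 1) := by
    refine ContinuousOn.div (by fun_prop) (by fun_prop) fun x hx => (hQpos x ?_).ne'
    exact ne_zero_of_mem_unit_sphere ⟨x, hx⟩
  obtain ⟨C₀, hC₀⟩ :=
    (isCompact_sphere (0 : n → ℝ) 1).exists_bound_of_continuousOn hcont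
  have hbound : ∀ x, x ⬝ᵥ P *ᵥ x ≤ (|C₀| + 1) * (x ⬝ᵥ Q *ᵥ x) := fun x => by
    rcases eq_or_ne x 0 with rfl | hx
    · simp
    have hnorm : ‖x‖⁻¹ • x ∈ Metric.sphere (0 : n → ℝ) 1 := by
      rw [mem_sphere_zero_iff_norm, norm_smul, norm_inv, norm_norm,
        inv_mul_cancel₀ (norm_ne_zero_iff.mpr hx)]
    have hscale : ratio (‖x‖⁻¹ • x) = ratio x := by
      simp only [ratio, smul_dotProduct_mulVec_smul]
      exact mul_div_mul_left _ _ (by positivity)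
    rw [← div_le_iff₀ (hQpos x hx)]
    calc ratio x = ratio (‖x‖⁻¹ • x) := hscale.symm
      _ ≤ ‖ratio (‖x‖⁻¹ • x)‖ := le_abs_self _
      _ ≤ C₀ := hC₀ _ hnorm
      _ ≤ |C₀| + 1 := by linarith [le_abs_self C₀]
  refine ⟨|C₀| + 1, by positivity, .of_dotProduct_mulVec_nonneg ?_ fun x => ?_⟩
  · exact (hQ.isHermitian.smul (IsSelfAdjoint.all _)).sub hP
  · simpa [sub_mulVec, smul_mulVec] using hbound x

theorem PosSemidef.exists_lt_one_smul_sub_posSemidef {P S : Matrix n n ℝ}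
    (hP : P.PosSemidef) (hPS : (P - S).PosDef) :
    ∃ ρ : ℝ, ρ < 1 ∧ (ρ • P - S).PosSemidef := by
  obtain ⟨C, hC, hle⟩ := hPS.exists_pos_smul_sub_posSemidef hP.isHermitian
  refine ⟨1 - C⁻¹, by simpa using hC, ?_⟩
  convert hle.smul (inv_nonneg.mpr hC.le) using 1
  rw [smul_sub, smul_smul, inv_mul_cancel₀ hC.ne']
  module

theorem PosSemidef.trace_mul_nonneg {A B : Matrix n n ℝ} (hA : A.PosSemidef)
    (hB : B.PosSemidef) : 0 ≤ (A * B).trace := by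
  classical
  obtain ⟨C, rfl⟩ : ∃ C : Matrix n n ℝ, B = star C * C := by
    open scoped MatrixOrder in
    exact CStarAlgebra.nonneg_iff_eq_star_mul_self.mp hB.nonneg
  rw [← Matrix.mul_assoc, trace_mul_comm, ← Matrix.mul_assoc, star_eq_conjTranspose]
  exact (hA.mul_mul_conjTranspose_same C).trace_nonneg

theorem PosSemidef.trace_mul_le_trace_mul {A B M : Matrix n n ℝ} (hAB : (B - A).PosSemidef)
    (hM : M.PosSemidef) : (A * M).trace ≤ (B * M).trace := by
  have := hAB.trace_mul_nonneg hM
  rwa [Matrix.sub_mul, trace_sub, sub_nonneg] at this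

theorem PosSemidef.abs_apply_le_trace {M : Matrix n n ℝ} (hM : M.PosSemidef) (i j : n) :
    |M i j| ≤ M.trace := by
  classical
  have quad : ∀ a b : n, Pi.single a 1 ⬝ᵥ M *ᵥ Pi.single b 1 = M a b := fun a b => by
    simp [single_dotProduct, mulVec_single]
  have hsymm : M j i = M i j := hM.isHermitian.apply i j
  have hplus := hM.dotProduct_mulVec_nonneg (Pi.single i 1 + Pi.single j 1)
  have hminus := hM.dotProduct_mulVec_nonneg (Pi.single i 1 - Pi.single j 1)
  simp only [star_trivial, add_dotProduct, dotProduct_add, sub_dotProduct, dotProduct_sub,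
    mulVec_add, mulVec_sub, quad] at hplus hminus
  have hdiag : ∀ a, M a a ≤ M.trace := fun a =>
    single_le_sum (f := fun b => M b b) (fun b _ => hM.diag_nonneg) (mem_univ a)
  rw [abs_le]
  constructor <;> linarith [hdiag i, hdiag j]

theorem posSemidef_sum_smul_mul_mul_transpose {ι : Type*} (s : Finset ι)
    (p : ι → ℝ) (A : ι → Matrix n n ℝ) {M : Matrix n n ℝ} (hp : ∀ i ∈ s, 0 ≤ p i)
    (hM : M.PosSemidef) : (∑ i ∈ s, p i • (A i * M * (A i)ᵀ)).PosSemidef :=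
  posSemidef_sum s fun i hi => (hM.mul_mul_conjTranspose_same (A i)).smul (hp i hi)

theorem trace_mul_sum_smul_mul_mul_transpose {R ι : Type*} [CommSemiring R] (s : Finset ι)
    (p : ι → R) (A : ι → Matrix n n R) (P M : Matrix n n R) :
    (P * ∑ i ∈ s, p i • (A i * M * (A i)ᵀ)).trace =
      ((∑ i ∈ s, p i • ((A i)ᵀ * P * A i)) * M).trace := by
  simp only [Matrix.mul_sum, Matrix.sum_mul, trace_sum, Matrix.mul_smul, Matrix.smul_mul,
    trace_smul]
  refine sum_congr rfl fun i _ => congrArg _ ?_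
  rw [← Matrix.mul_assoc, ← Matrix.mul_assoc, trace_mul_comm, ← Matrix.mul_assoc,
    ← Matrix.mul_assoc]

theorem tendsto_zero_of_trace_tendsto_zero {α : Type*} {l : Filter α} {M : α → Matrix n n ℝ}
    (hM : ∀ a, (M a).PosSemidef) (h : Tendsto (fun a => (M a).trace) l (𝓝 0)) :
    Tendsto M l (𝓝 0) := by
  refine tendsto_pi_nhds.mpr fun i => tendsto_pi_nhds.mpr fun j => ?_
  exact squeeze_zero_norm (fun a => (hM a).abs_apply_le_trace i j) h

theorem PosDef.tendsto_zero_of_trace_mul_tendsto_zero {α : Type*} {l : Filter α}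
    {P : Matrix n n ℝ} {M : α → Matrix n n ℝ} (hP : P.PosDef) (hM : ∀ a, (M a).PosSemidef)
    (h : Tendsto (fun a => (P * M a).trace) l (𝓝 0)) : Tendsto M l (𝓝 0) := by
  classical
  obtain ⟨C, -, hle⟩ := hP.exists_pos_smul_sub_posSemidef isHermitian_one
  refine tendsto_zero_of_trace_tendsto_zero hM <|
    squeeze_zero (fun a => (hM a).trace_nonneg) (fun a => ?_) (by simpa using h.const_mul C)
  simpa [trace_smul] using hle.trace_mul_le_trace_mul (hM a)

end Matrix

theorem tendsto_zero_of_succ_le_mul {v : ℕ → ℝ} {ρ : ℝ} (hv : ∀ t, 0 ≤ v t)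
    (hρ : ρ < 1) (h : ∀ t, v (t + 1) ≤ ρ * v t) : Tendsto v atTop (𝓝 0) := by
  have hρ₀ : 0 ≤ max ρ 0 := le_max_right ρ 0
  have hstep : ∀ t, v (t + 1) ≤ max ρ 0 * v t := fun t =>
    (h t).trans (mul_le_mul_of_nonneg_right (le_max_left ρ 0) (hv t))
  refine squeeze_zero hv (fun t => le_geom hρ₀ t fun k _ => hstep k) ?_
  simpa using (tendsto_pow_atTop_nhds_zero_of_lt_one hρ₀ (max_lt hρ one_pos)).mul_const (v 0)

/-- the Lyapunov condition Σ pᵢ Aᵢᵀ P Aᵢ − P ≺ 0 with P ≻ 0 implies the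
second-moment recursion M_{t+1} = Σᵢ pᵢ Aᵢ M_t Aᵢᵀ with M₀ = x₀x₀ᵀ converges to 0. -/
theorem lyapunov_implies_second_moment_stability (n k : ℕ)
    (A : Fin k → Matrix (Fin n) (Fin n) ℝ) (p : Fin k → ℝ)
    (hp : (∀ i, 0 ≤ p i) ∧ ∑ i, p i = 1)
    (P : Matrix (Fin n) (Fin n) ℝ) (hP : P.PosDef)
    (hLyap : (P - ∑ i, p i • ((A i)ᵀ * P * A i)).PosDef) :
    ∀ (x₀ : Fin n → ℝ) (M : ℕ → Matrix (Fin n) (Fin n) ℝ),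
      M 0 = Matrix.vecMulVec x₀ x₀ →
      (∀ t, M (t + 1) = ∑ i, p i • (A i * M t * (A i)ᵀ)) →
      Filter.Tendsto M Filter.atTop (nhds 0) := by
  intro x₀ M hM0 hrec
  have hM : ∀ t, (M t).PosSemidef := by
    intro t
    induction t with
    | zero => simpa [hM0] using posSemidef_vecMulVec_self_star x₀
    | succ t ih =>
      exact hrec t ▸ posSemidef_sum_smul_mul_mul_transpose _ _ _ (fun i _ => hp.1 i) ih
  obtain ⟨ρ, hρ_lt, hρ⟩ := hP.posSemidef.exists_lt_one_smul_sub_posSemidef hLyap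
  refine hP.tendsto_zero_of_trace_mul_tendsto_zero hM <| tendsto_zero_of_succ_le_mul
    (fun t => hP.posSemidef.trace_mul_nonneg (hM t)) hρ_lt fun t => ?_
  calc (P * M (t + 1)).trace = ((∑ i, p i • ((A i)ᵀ * P * A i)) * M t).trace := by
        rw [hrec, trace_mul_sum_smul_mul_mul_transpose]
    _ ≤ (ρ • P * M t).trace := hρ.trace_mul_le_trace_mul (hM t)
    _ = ρ * (P * M t).trace := by rw [Matrix.smul_mul, trace_smul, smul_eq_mul]
end
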